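/- Let t₀ ∈ (0,∞) and let a ∈ L^∞(ℝ). If a is continuous at the point −1/(2√t₀), then the matrix-valued function φ^a(t₁,t₂) = ∫_ℝ a((−t₁+s)/(2√(t₂(t₁²+1)))) H(s)[H(s)]^T ds on Π = ℝ × (0,∞) satisfies lim_{(t₁,t₂)→(+∞,t₀)} φ^a(t₁,t₂) = a(−1/(2√t₀))·I, i.e., for every ε > 0 there exist δ > 0 and Nₒ > 0 such that ‖φ^a(t₁,t₂) − a(−1/(2√t₀))·I‖ < ε whenever |t₂ − t₀| < δ and t₁ > Nₒ. Analogously, if a is continuous at 1/(2√t₀), then lim_{(t₁,t₂)→(−∞,t₀)} φ^a(t₁,t₂) = a(1/(2√t₀))·I. -/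

import Mathlib

/-!
The `(j, k)` entry of `φ^a(t₁, t₂)` is `∫ a(θ) h_j(s) h_k(s) ds` with
`θ = (-t₁ + s) / (2√(t₂(t₁² + 1)))`, and for each fixed `s` this argument tends to
`∓1/(2√t₀)` as `t₁ → ±∞`, `t₂ → t₀`. As `a` is bounded and `h_j h_k` integrable, dominated
convergence gives the limit `a(∓1/(2√t₀)) ∫ h_j h_k`, which is `a(∓1/(2√t₀)) δ_jk` by
orthonormality of the Hermite functions. Orthonormality follows from Rodrigues' formula
`H_k e^{-y²} = (-1)^k (e^{-y²})^{(k)}`: `k` integrations by parts turn `∫ H_j H_k e^{-y²}` into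
`∫ H_j^{(k)} e^{-y²}`, which vanishes for `j < k` and equals `2^k k! √π` for `j = k`.
-/

open MeasureTheory Filter Topology
open scoped Matrix.Norms.L2Operator

noncomputable section

/-- The physicists' Hermite polynomial `H_m(y) = (−1)^m e^{y²} (d/dy)^m e^{−y²}`. -/
def hermiteH (m : ℕ) (y : ℝ) : ℝ :=
  (-1 : ℝ) ^ m * Real.exp (y ^ 2) * iteratedDeriv m (fun x => Real.exp (-x ^ 2)) y

/-- The Hermite function `h_m(y) = (2^m m! √π)^{−1/2} H_m(y) e^{−y²/2}`. -/
def hermiteFun (m : ℕ) (y : ℝ) : ℝ :=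
  (Real.sqrt (2 ^ m * m.factorial * Real.sqrt Real.pi))⁻¹ * hermiteH m y *
    Real.exp (-y ^ 2 / 2)

/-- The matrix `H(y)[H(y)]ᵀ`, where `H(y) = (h_0(y), …, h_{n−1}(y))ᵀ`. -/
def HHT (n : ℕ) (y : ℝ) : Matrix (Fin n) (Fin n) ℝ :=
  Matrix.of fun j k : Fin n => hermiteFun j y * hermiteFun k y

/-- `φ^a(t₁,t₂) = ∫_ℝ a((−t₁+s)/(2√(t₂(t₁²+1)))) H(s)[H(s)]ᵀ ds` as a complex matrix. -/
def phiA (n : ℕ) (a : ℝ → ℂ) (t₁ t₂ : ℝ) : Matrix (Fin n) (Fin n) ℂ :=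
  Matrix.of fun j k : Fin n =>
    ∫ s : ℝ, a ((-t₁ + s) / (2 * Real.sqrt (t₂ * (t₁ ^ 2 + 1)))) * (HHT n s j k : ℂ)

open Polynomial

def physHermite : ℕ → ℝ[X]
  | 0 => 1
  | m + 1 => C 2 * (X * physHermite m) - derivative (physHermite m)

theorem hasDerivAt_physHermite_mul_exp_neg_sq (m : ℕ) (y : ℝ) :
    HasDerivAt (fun y => (physHermite m).eval y * Real.exp (-y ^ 2))
      (-((physHermite (m + 1)).eval y * Real.exp (-y ^ 2))) y := by
  have hexp : HasDerivAt (fun y : ℝ => Real.exp (-y ^ 2)) (-(2 * y) * Real.exp (-y ^ 2)) y := by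
    simpa [mul_comm] using ((hasDerivAt_pow 2 y).neg).exp
  refine (((physHermite m).hasDerivAt y).fun_mul hexp).congr_deriv ?_
  simp only [physHermite, eval_sub, eval_mul, eval_C, eval_X]
  ring

theorem iteratedDeriv_exp_neg_sq (m : ℕ) :
    iteratedDeriv m (fun y : ℝ => Real.exp (-y ^ 2)) =
      fun y => (-1) ^ m * ((physHermite m).eval y * Real.exp (-y ^ 2)) := by
  induction m with
  | zero => funext y; simp [physHermite]
  | succ m ih =>
    funext y
    rw [iteratedDeriv_succ, ih]
    convert ((hasDerivAt_physHermite_mul_exp_neg_sq m y).const_mul ((-1 : ℝ) ^ m)).deriv using 1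
    ring

theorem hermiteH_eq_eval (m : ℕ) (y : ℝ) : hermiteH m y = (physHermite m).eval y := by
  have hexp : Real.exp (y ^ 2) * Real.exp (-y ^ 2) = 1 := by rw [← Real.exp_add]; simp
  have hsign : (-1 : ℝ) ^ m * (-1) ^ m = 1 := by rw [← mul_pow]; simp
  rw [hermiteH, iteratedDeriv_exp_neg_sq]
  linear_combination (physHermite m).eval y * ((-1) ^ m * (-1) ^ m * hexp + hsign)

theorem natDegree_physHermite_le (m : ℕ) : (physHermite m).natDegree ≤ m := by
  induction m with
  | zero => simp [physHermite]
  | succ m ih =>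
    refine (natDegree_sub_le _ _).trans (max_le ?_ ((natDegree_derivative_le _).trans (by omega)))
    refine (natDegree_C_mul_le _ _).trans (natDegree_mul_le.trans ?_)
    simp only [natDegree_X]
    omega

theorem coeff_physHermite_self (m : ℕ) : (physHermite m).coeff m = 2 ^ m := by
  induction m with
  | zero => simp [physHermite]
  | succ m ih =>
    have hz : (physHermite m).coeff (m + 2) = 0 :=
      coeff_eq_zero_of_natDegree_lt ((natDegree_physHermite_le m).trans_lt (by omega))
    simp only [physHermite, coeff_sub, coeff_C_mul, coeff_X_mul, coeff_derivative, ih, hz]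
    ring

theorem iterate_derivative_physHermite_self (m : ℕ) :
    derivative^[m] (physHermite m) = C ((m.factorial : ℝ) * 2 ^ m) := by
  have hdeg : (derivative^[m] (physHermite m)).natDegree = 0 := by
    have := (natDegree_iterate_derivative (physHermite m) m).trans
      (Nat.sub_le_sub_right (natDegree_physHermite_le m) m)
    omega
  rw [eq_C_of_natDegree_eq_zero hdeg, coeff_iterate_derivative]
  simp [Nat.descFactorial_self, coeff_physHermite_self, nsmul_eq_mul]

theorem iterate_derivative_physHermite_of_lt {j k : ℕ} (h : j < k) :
    derivative^[k] (physHermite j) = 0 :=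
  iterate_derivative_eq_zero ((natDegree_physHermite_le j).trans_lt h)

theorem integrable_eval_mul_exp_neg_sq (Q : ℝ[X]) :
    Integrable fun y : ℝ => Q.eval y * Real.exp (-y ^ 2) := by
  induction Q using Polynomial.induction_on' with
  | add p q hp hq => simpa [add_mul] using hp.fun_add hq
  | monomial k c =>
    have := integrable_rpow_mul_exp_neg_mul_sq (b := 1) one_pos
      (s := k) (neg_one_lt_zero.trans_le k.cast_nonneg)
    simpa [Real.rpow_natCast, mul_assoc] using this.const_mul c

theorem integral_eval_mul_physHermite_mul_exp_neg_sq (Q : ℝ[X]) (k : ℕ) :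
    ∫ y, Q.eval y * ((physHermite k).eval y * Real.exp (-y ^ 2)) =
      ∫ y, (derivative^[k] Q).eval y * Real.exp (-y ^ 2) := by
  induction k generalizing Q with
  | zero => simp [physHermite]
  | succ k ih =>
    have hint (R : ℝ[X]) (i : ℕ) :
        Integrable fun y => R.eval y * ((physHermite i).eval y * Real.exp (-y ^ 2)) := by
      simpa [mul_assoc] using integrable_eval_mul_exp_neg_sq (R * physHermite i)
    have hparts := integral_mul_deriv_eq_deriv_mul_of_integrable
      (u := fun y => Q.eval y) (u' := fun y => (derivative Q).eval y)
      (fun y _ => Q.hasDerivAt y) (fun y _ => hasDerivAt_physHermite_mul_exp_neg_sq k y)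
      (by simpa [Pi.mul_def] using (hint Q (k + 1)).neg) (hint _ k) (hint Q k)
    rw [Function.iterate_succ_apply, ← ih, ← neg_eq_iff_eq_neg.mpr hparts, ← integral_neg]
    simp

theorem integral_physHermite_mul_physHermite_mul_exp_neg_sq_of_lt {j k : ℕ} (h : j < k) :
    ∫ y, (physHermite j).eval y * ((physHermite k).eval y * Real.exp (-y ^ 2)) = 0 := by
  simp [integral_eval_mul_physHermite_mul_exp_neg_sq, iterate_derivative_physHermite_of_lt h]

theorem integral_physHermite_mul_physHermite_mul_exp_neg_sq_self (m : ℕ) :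
    ∫ y, (physHermite m).eval y * ((physHermite m).eval y * Real.exp (-y ^ 2)) =
      2 ^ m * m.factorial * Real.sqrt Real.pi := by
  have hgauss : ∫ y : ℝ, Real.exp (-y ^ 2) = Real.sqrt Real.pi := by
    simpa using integral_gaussian 1
  rw [integral_eval_mul_physHermite_mul_exp_neg_sq, iterate_derivative_physHermite_self]
  simp only [eval_C]
  rw [integral_const_mul, hgauss]
  ring

theorem hermiteFun_mul_hermiteFun (j k : ℕ) (y : ℝ) :
    hermiteFun j y * hermiteFun k y =
      (Real.sqrt (2 ^ j * j.factorial * Real.sqrt Real.pi))⁻¹ *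
        (Real.sqrt (2 ^ k * k.factorial * Real.sqrt Real.pi))⁻¹ *
        ((physHermite j).eval y * ((physHermite k).eval y * Real.exp (-y ^ 2))) := by
  have hexp : Real.exp (-y ^ 2 / 2) * Real.exp (-y ^ 2 / 2) = Real.exp (-y ^ 2) := by
    rw [← Real.exp_add]; ring_nf
  simp only [hermiteFun, hermiteH_eq_eval, ← hexp]
  ring

theorem integral_hermiteFun_mul_hermiteFun (j k : ℕ) :
    ∫ y, hermiteFun j y * hermiteFun k y = if j = k then 1 else 0 := by
  rcases lt_trichotomy j k with h | rfl | h
  · simp_rw [hermiteFun_mul_hermiteFun]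
    rw [integral_const_mul, integral_physHermite_mul_physHermite_mul_exp_neg_sq_of_lt h,
      mul_zero, if_neg h.ne]
  · rw [if_pos rfl]
    simp_rw [hermiteFun_mul_hermiteFun]
    rw [integral_const_mul, integral_physHermite_mul_physHermite_mul_exp_neg_sq_self, ← mul_inv,
      Real.mul_self_sqrt (by positivity)]
    exact inv_mul_cancel₀ (by positivity)
  · simp_rw [mul_comm (hermiteFun j _), hermiteFun_mul_hermiteFun]
    rw [integral_const_mul, integral_physHermite_mul_physHermite_mul_exp_neg_sq_of_lt h,
      mul_zero, if_neg h.ne']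

theorem integrable_hermiteFun_mul_hermiteFun (j k : ℕ) :
    Integrable fun y => hermiteFun j y * hermiteFun k y := by
  refine ((integrable_eval_mul_exp_neg_sq (physHermite j * physHermite k)).const_mul
    ((Real.sqrt (2 ^ j * j.factorial * Real.sqrt Real.pi))⁻¹ *
      (Real.sqrt (2 ^ k * k.factorial * Real.sqrt Real.pi))⁻¹)).congr (ae_of_all _ fun y => ?_)
  dsimp only
  rw [hermiteFun_mul_hermiteFun, eval_mul, mul_assoc (eval y _)]

theorem sqrt_sq_add_one_eq_abs_mul {t : ℝ} (ht : t ≠ 0) :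
    Real.sqrt (t ^ 2 + 1) = |t| * Real.sqrt (1 + t⁻¹ ^ 2) := by
  rw [← Real.sqrt_sq_eq_abs, ← Real.sqrt_mul (sq_nonneg t)]
  congr 1
  field_simp

theorem tendsto_neg_add_div_sqrt_sq_add_one_atTop (s : ℝ) :
    Tendsto (fun t : ℝ => (-t + s) / Real.sqrt (t ^ 2 + 1)) atTop (𝓝 (-1)) := by
  -- with `x = t⁻¹` the quotient becomes a function continuous at `x = 0`
  have hg : Tendsto (fun x : ℝ => (-1 + s * x) / Real.sqrt (1 + x ^ 2)) (𝓝 0) (𝓝 (-1)) := by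
    have : ContinuousAt (fun x : ℝ => (-1 + s * x) / Real.sqrt (1 + x ^ 2)) 0 := by
      fun_prop (disch := simp)
    simpa using this.tendsto
  refine (hg.comp tendsto_inv_atTop_zero).congr' ?_
  filter_upwards [eventually_gt_atTop 0] with t ht
  rw [Function.comp_apply, sqrt_sq_add_one_eq_abs_mul ht.ne', abs_of_pos ht]
  field_simp

theorem tendsto_neg_add_div_sqrt_sq_add_one_atBot (s : ℝ) :
    Tendsto (fun t : ℝ => (-t + s) / Real.sqrt (t ^ 2 + 1)) atBot (𝓝 1) := by
  have hg : Tendsto (fun x : ℝ => (1 - s * x) / Real.sqrt (1 + x ^ 2)) (𝓝 0) (𝓝 1) := by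
    have : ContinuousAt (fun x : ℝ => (1 - s * x) / Real.sqrt (1 + x ^ 2)) 0 := by
      fun_prop (disch := simp)
    simpa using this.tendsto
  refine (hg.comp tendsto_inv_atBot_zero).congr' ?_
  filter_upwards [eventually_lt_atBot 0] with t ht
  have hne : t ≠ 0 := ht.ne
  rw [Function.comp_apply, sqrt_sq_add_one_eq_abs_mul hne, abs_of_neg ht]
  field_simp
  ring

theorem tendsto_neg_add_div_two_mul_sqrt {F : Filter ℝ} {L t₀ : ℝ} (ht₀ : 0 < t₀) {s : ℝ}
    (hL : Tendsto (fun t : ℝ => (-t + s) / Real.sqrt (t ^ 2 + 1)) F (𝓝 L)) :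
    Tendsto (fun p : ℝ × ℝ => (-p.1 + s) / (2 * Real.sqrt (p.2 * (p.1 ^ 2 + 1))))
      (F ×ˢ 𝓝 t₀) (𝓝 (L / (2 * Real.sqrt t₀))) := by
  have hden : Tendsto (fun p : ℝ × ℝ => 2 * Real.sqrt p.2) (F ×ˢ 𝓝 t₀)
      (𝓝 (2 * Real.sqrt t₀)) :=
    ((Real.continuous_sqrt.tendsto t₀).comp tendsto_snd).const_mul 2
  convert (hL.comp tendsto_fst).div hden (by positivity) using 2 with p
  simp only [Pi.div_apply, Function.comp_apply]
  rw [Real.sqrt_mul' _ (by positivity), div_div]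
  ring

theorem tendsto_integral_comp_mul_of_tendsto {X α ι : Type*} [TopologicalSpace X]
    [MeasurableSpace X] [MeasurableSpace α] {μ : Measure α} {l : Filter ι}
    [l.IsCountablyGenerated] {a : X → ℂ} (ha_meas : Measurable a) {C : ℝ}
    (hC : ∀ x, ‖a x‖ ≤ C) {c : X} (ha : ContinuousAt a c) {g : α → ℂ} (hg : Integrable g μ)
    {θ : ι → α → X} (hθ_meas : ∀ i, Measurable (θ i)) (hθ : ∀ y, Tendsto (θ · y) l (𝓝 c)) :
    Tendsto (fun i => ∫ y, a (θ i y) * g y ∂μ) l (𝓝 (a c * ∫ y, g y ∂μ)) := by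
  rw [← integral_const_mul]
  refine tendsto_integral_filter_of_dominated_convergence (fun y => C * ‖g y‖)
    (.of_forall fun i => ((ha_meas.comp (hθ_meas i)).aestronglyMeasurable.mul
      hg.aestronglyMeasurable)) (.of_forall fun i => ae_of_all _ fun y => ?_)
    (hg.norm.const_mul C) (ae_of_all _ fun y => ((ha.tendsto.comp (hθ y)).mul_const (g y)))
  rw [norm_mul]
  exact mul_le_mul_of_nonneg_right (hC _) (norm_nonneg _)

theorem tendsto_phiA (n : ℕ) {a : ℝ → ℂ} (ha_meas : Measurable a) {C : ℝ}
    (hC : ∀ y, ‖a y‖ ≤ C) {t₀ : ℝ} (ht₀ : 0 < t₀) {F : Filter ℝ} [F.IsCountablyGenerated]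
    {L : ℝ} (hL : ∀ s, Tendsto (fun t : ℝ => (-t + s) / Real.sqrt (t ^ 2 + 1)) F (𝓝 L))
    (ha : ContinuousAt a (L / (2 * Real.sqrt t₀))) :
    Tendsto (fun p : ℝ × ℝ => phiA n a p.1 p.2) (F ×ˢ 𝓝 t₀)
      (𝓝 (a (L / (2 * Real.sqrt t₀)) • (1 : Matrix (Fin n) (Fin n) ℂ))) := by
  refine tendsto_pi_nhds.mpr fun j => tendsto_pi_nhds.mpr fun k => ?_
  have hlim : (a (L / (2 * Real.sqrt t₀)) • (1 : Matrix (Fin n) (Fin n) ℂ)) j k =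
      a (L / (2 * Real.sqrt t₀)) * ∫ s, ((hermiteFun j s * hermiteFun k s : ℝ) : ℂ) := by
    rw [Matrix.smul_apply, Matrix.one_apply, integral_complex_ofReal,
      integral_hermiteFun_mul_hermiteFun]
    by_cases hjk : j = k <;> simp [hjk, Fin.val_inj]
  rw [hlim]
  exact tendsto_integral_comp_mul_of_tendsto ha_meas hC ha
    (integrable_hermiteFun_mul_hermiteFun j k).ofReal (fun p => by fun_prop)
    (fun s => tendsto_neg_add_div_two_mul_sqrt ht₀ (hL s))

theorem exists_forall_dist_lt_of_tendsto_atTop_prod {X : Type*} [PseudoMetricSpace X]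
    {f : ℝ → ℝ → X} {t₀ : ℝ} {x : X}
    (h : Tendsto (fun p : ℝ × ℝ => f p.1 p.2) (atTop ×ˢ 𝓝 t₀) (𝓝 x)) {ε : ℝ} (hε : 0 < ε) :
    ∃ δ > 0, ∃ N > 0, ∀ t₁ t₂, |t₂ - t₀| < δ → N < t₁ → dist (f t₁ t₂) x < ε := by
  obtain ⟨⟨N, δ⟩, ⟨hN, hδ⟩, hball⟩ :=
    (((atTop_basis_Ioi' 0).prod Metric.nhds_basis_ball).tendsto_iff Metric.nhds_basis_ball).mp
      h ε hε
  exact ⟨δ, hδ, N, hN, fun t₁ t₂ ht₂ ht₁ => hball (t₁, t₂) ⟨ht₁, ht₂⟩⟩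

theorem exists_forall_dist_lt_of_tendsto_atBot_prod {X : Type*} [PseudoMetricSpace X]
    {f : ℝ → ℝ → X} {t₀ : ℝ} {x : X}
    (h : Tendsto (fun p : ℝ × ℝ => f p.1 p.2) (atBot ×ˢ 𝓝 t₀) (𝓝 x)) {ε : ℝ} (hε : 0 < ε) :
    ∃ δ > 0, ∃ N > 0, ∀ t₁ t₂, |t₂ - t₀| < δ → t₁ < -N → dist (f t₁ t₂) x < ε := by
  have hneg := h.comp (tendsto_neg_atTop_atBot.prodMap tendsto_id)
  obtain ⟨δ, hδ, N, hN, hball⟩ :=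
    exists_forall_dist_lt_of_tendsto_atTop_prod (f := fun t₁ t₂ => f (-t₁) t₂) hneg hε
  exact ⟨δ, hδ, N, hN, fun t₁ t₂ ht₂ ht₁ => by
    simpa using hball (-t₁) t₂ ht₂ (lt_neg_of_lt_neg ht₁)⟩

theorem phiA_limit_lateral_general (n : ℕ) (t₀ : ℝ) (ht₀ : 0 < t₀) (a : ℝ → ℂ)
    (ha_meas : Measurable a) (ha_bdd : ∃ C : ℝ, ∀ y : ℝ, ‖a y‖ ≤ C) :
    (ContinuousAt a (-(1 / (2 * Real.sqrt t₀))) →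
      ∀ ε > (0 : ℝ), ∃ δ > (0 : ℝ), ∃ N > (0 : ℝ), ∀ t₁ t₂ : ℝ,
        0 < t₂ → |t₂ - t₀| < δ → N < t₁ →
        ‖phiA n a t₁ t₂ -
            a (-(1 / (2 * Real.sqrt t₀))) • (1 : Matrix (Fin n) (Fin n) ℂ)‖ < ε) ∧
    (ContinuousAt a (1 / (2 * Real.sqrt t₀)) →
      ∀ ε > (0 : ℝ), ∃ δ > (0 : ℝ), ∃ N > (0 : ℝ), ∀ t₁ t₂ : ℝ,
        0 < t₂ → |t₂ - t₀| < δ → t₁ < -N →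
        ‖phiA n a t₁ t₂ -
            a (1 / (2 * Real.sqrt t₀)) • (1 : Matrix (Fin n) (Fin n) ℂ)‖ < ε) := by
  obtain ⟨C, hC⟩ := ha_bdd
  constructor
  · intro ha ε hε
    rw [← neg_div] at ha ⊢
    obtain ⟨δ, hδ, N, hN, hball⟩ := exists_forall_dist_lt_of_tendsto_atTop_prod
      (tendsto_phiA n ha_meas hC ht₀ tendsto_neg_add_div_sqrt_sq_add_one_atTop ha) hε
    exact ⟨δ, hδ, N, hN, fun t₁ t₂ _ ht₂ ht₁ => by
      rw [← dist_eq_norm]; exact hball t₁ t₂ ht₂ ht₁⟩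
  · intro ha ε hε
    obtain ⟨δ, hδ, N, hN, hball⟩ := exists_forall_dist_lt_of_tendsto_atBot_prod
      (tendsto_phiA n ha_meas hC ht₀ tendsto_neg_add_div_sqrt_sq_add_one_atBot ha) hε
    exact ⟨δ, hδ, N, hN, fun t₁ t₂ _ ht₂ ht₁ => by
      rw [← dist_eq_norm]; exact hball t₁ t₂ ht₂ ht₁⟩

/-- Let `t₀ ∈ (0,∞)` and `a ∈ L^∞(ℝ)`. If `a` is continuous at
`−1/(2√t₀)` then `φ^a(t₁,t₂) → a(−1/(2√t₀))·I` as `(t₁,t₂) → (+∞,t₀)`; if `a` is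
continuous at `1/(2√t₀)` then `φ^a(t₁,t₂) → a(1/(2√t₀))·I` as `(t₁,t₂) → (−∞,t₀)`. -/
theorem phiA_limit_lateral (n : ℕ) (hn : 1 ≤ n) (t₀ : ℝ) (ht₀ : 0 < t₀) (a : ℝ → ℂ)
    (ha_meas : Measurable a) (ha_bdd : ∃ C : ℝ, ∀ y : ℝ, ‖a y‖ ≤ C) :
    (ContinuousAt a (-(1 / (2 * Real.sqrt t₀))) →
      ∀ ε > (0 : ℝ), ∃ δ > (0 : ℝ), ∃ N > (0 : ℝ), ∀ t₁ t₂ : ℝ,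
        0 < t₂ → |t₂ - t₀| < δ → N < t₁ →
        ‖phiA n a t₁ t₂ -
            a (-(1 / (2 * Real.sqrt t₀))) • (1 : Matrix (Fin n) (Fin n) ℂ)‖ < ε) ∧
    (ContinuousAt a (1 / (2 * Real.sqrt t₀)) →
      ∀ ε > (0 : ℝ), ∃ δ > (0 : ℝ), ∃ N > (0 : ℝ), ∀ t₁ t₂ : ℝ,
        0 < t₂ → |t₂ - t₀| < δ → t₁ < -N →
        ‖phiA n a t₁ t₂ -
            a (1 / (2 * Real.sqrt t₀)) • (1 : Matrix (Fin n) (Fin n) ℂ)‖ < ε) :=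
  phiA_limit_lateral_general n t₀ ht₀ a ha_meas ha_bdd
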